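/- Let m,ℓ ≥ 1 and ω = (m,−ℓ). Then the relation ⊴ on C_ω is a partial order, and every nontrivial order filter θ of (C_ω, ⊴) is a cylindric diagram of the form λ̂ for a unique λ ∈ P_{m,ℓ}. -/
import Mathlib


open scoped BigOperators

/-- A cell of the plane `ℤ²`. -/
abbrev Cell : Type := ℤ × ℤ

/-- The partial order `⊴` on `ℤ²`: `(a,b) ⊴ (a',b')` iff `a ≥ a'` and `b ≥ b'`. -/
def cellLE (u v : Cell) : Prop := v.1 ≤ u.1 ∧ v.2 ≤ u.2

/-- The cylinder `C_ω = ℤ²/ℤω`. -/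
abbrev Cyl (ω : Cell) : Type := Cell ⧸ AddSubgroup.zmultiples ω

/-- The natural projection `π : ℤ² → C_ω`. -/
def pr (ω : Cell) : Cell → Cyl ω := QuotientAddGroup.mk

/-- The induced relation `⊴` on the cylinder: `x ⊴ y` iff some lifts satisfy `x̃ ⊴ ỹ`. -/
def cylLE (ω : Cell) (x y : Cyl ω) : Prop :=
  ∃ u v : Cell, pr ω u = x ∧ pr ω v = y ∧ cellLE u v

/-- The hook of `x` in a diagram `Θ ⊆ ℤ²`. -/
def hookSet (Θ : Set Cell) (x : Cell) : Set Cell :=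
  Θ ∩ ({y | ∃ k : ℤ, 0 ≤ k ∧ y = x + (k, 0)} ∪ {y | ∃ k : ℤ, 1 ≤ k ∧ y = x + (0, k)})

/-- The hook length of `x` in `Θ`. -/
noncomputable def hookLen (Θ : Set Cell) (x : Cell) : ℕ := (hookSet Θ x).ncard

/-- The hook length of a cell of the cylinder, computed via a lift. -/
noncomputable def cylHook (ω : Cell) (Θ : Set Cell) (x : Cyl ω) : ℕ :=
  hookLen Θ (Quotient.out x)

/-- The `ℤω`-orbit of a cell. -/
def zline (ω y : Cell) : Set Cell := {z | ∃ k : ℤ, z = y + k • ω}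

/-- `S + ℤω`. -/
def perClosure (ω : Cell) (S : Set Cell) : Set Cell := {z | ∃ y ∈ S, ∃ k : ℤ, z = y + k • ω}

/-- Translation of a set of cells by `u`. -/
def shiftSet (u : Cell) (S : Set Cell) : Set Cell := (· + u) '' S

/-- The semi-infinite diagram `λ̄ = {(a,b) : 1 ≤ a ≤ m, b ≤ λ_a}`. -/
def lowerDiag (m : ℤ) (lam : ℤ → ℤ) : Set Cell := {p | 1 ≤ p.1 ∧ p.1 ≤ m ∧ p.2 ≤ lam p.1}

/-- The Young diagram `{(a,b) : 1 ≤ a ≤ m, 1 ≤ b ≤ λ_a}`. -/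
def youngDiag (m : ℤ) (lam : ℤ → ℤ) : Set Cell :=
  {p | 1 ≤ p.1 ∧ p.1 ≤ m ∧ 1 ≤ p.2 ∧ p.2 ≤ lam p.1}

/-- The skew diagram `λ/μ = {(a,b) : 1 ≤ a ≤ m, μ_a < b ≤ λ_a}`. -/
def skewDiag (m : ℤ) (lam mu : ℤ → ℤ) : Set Cell :=
  {p | 1 ≤ p.1 ∧ p.1 ≤ m ∧ mu p.1 < p.2 ∧ p.2 ≤ lam p.1}

/-- The periodic diagram `λ̃ = λ̄ + ℤ(m,−ℓ)`. -/
def perDiag (m l : ℤ) (lam : ℤ → ℤ) : Set Cell := perClosure (m, -l) (lowerDiag m lam)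

/-- The cylindric diagram `λ̂ = π(λ̃)`. -/
def cylDiag (m l : ℤ) (lam : ℤ → ℤ) : Set (Cyl (m, -l)) := pr (m, -l) '' perDiag m l lam

/-- `λ ∈ P_{m,ℓ}`: an `ℓ`-restricted generalized partition of length `m`
(only the values `λ_1, …, λ_m` are relevant). -/
def IsRestricted (m l : ℤ) (lam : ℤ → ℤ) : Prop :=
  (∀ a : ℤ, 1 ≤ a → a < m → lam (a + 1) ≤ lam a) ∧ lam 1 - lam m ≤ l

/-- `y` is a `D`-active cell (with ambient diagram `Θ`). -/
def IsActive (Θ D : Set Cell) (y : Cell) : Prop :=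
  y ∈ D ∧ y + (1, 0) ∈ Θ \ D ∧ y + (0, 1) ∈ Θ \ D ∧ y + (1, 1) ∈ Θ \ D

/-- One elementary excitation inside `Θ`. -/
def exciteStep (Θ D E : Set Cell) : Prop :=
  ∃ y, IsActive Θ D y ∧ E = (D \ {y}) ∪ {y + (1, 1)}

/-- The excited diagrams of `M` in `Θ`. -/
def ExcitedSet (Θ M : Set Cell) : Set (Set Cell) :=
  {D | Relation.ReflTransGen (exciteStep Θ) M D}

/-- One periodic elementary excitation inside `Θ`. -/
def pExciteStep (ω : Cell) (Θ D E : Set Cell) : Prop :=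
  ∃ y, IsActive Θ D y ∧ E = (D \ zline ω y) ∪ zline ω (y + (1, 1))

/-- The periodic excited diagrams of `M` in `Θ`. -/
def PExcitedSet (ω : Cell) (Θ M : Set Cell) : Set (Set Cell) :=
  {D | Relation.ReflTransGen (pExciteStep ω Θ) M D}

/-- The cylindric excited diagrams: images under `π` of the periodic excited diagrams. -/
def CylExcitedSet (ω : Cell) (Θ M : Set Cell) : Set (Set (Cyl ω)) :=
  (fun D => pr ω '' D) '' PExcitedSet ω Θ M

/-- A linear extension of `S` (with respect to a relation `R`): a bijection
`ε : S → {1,…,n}` with `ε x < ε y` whenever `R x y` and `x ≠ y`. -/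
def IsLinExt {α : Type} (R : α → α → Prop) (S : Set α) (n : ℕ) (ε : S → Fin n) : Prop :=
  Function.Bijective ε ∧ ∀ x y : S, R (x : α) (y : α) → (x : α) ≠ (y : α) → ε x < ε y

/-- The number of linear extensions of `S`. -/
noncomputable def linExtCount {α : Type} (R : α → α → Prop) (S : Set α) (n : ℕ) : ℕ :=
  Nat.card {ε : S → Fin n // IsLinExt R S n ε}

/-- A reverse standard tableau on a (skew) diagram `S` of `n` cells. -/
def IsRST (S : Set Cell) (n : ℕ) (ε : S → Fin n) : Prop :=
  Function.Bijective ε ∧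
    (∀ x y : S, (y : Cell) = (x : Cell) + (0, 1) → ε y < ε x) ∧
    (∀ x y : S, (y : Cell) = (x : Cell) + (1, 0) → ε y < ε x)

/-- An `ℓ`-restricted reverse standard tableau on a skew diagram of length `m`. -/
def IsRSTl (m l : ℤ) (S : Set Cell) (n : ℕ) (ε : S → Fin n) : Prop :=
  IsRST S n ε ∧
    ∀ x y : S, (x : Cell).1 = 1 → (y : Cell) = (m, (x : Cell).2 - l) → ε x < ε y

/-- One lattice step: right by `(1,0)` or down by `(0,−1)`. -/
def stepRel (a b : Cell) : Prop := b - a = (1, 0) ∨ b - a = (0, -1)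

/-- `p` is (the list of cells of) a lattice path from `u` to `v`. -/
def IsLatticePathList (u v : Cell) (p : List Cell) : Prop :=
  p.head? = some u ∧ p.getLast? = some v ∧ p.Chain' stepRel

/-- `L(u,v)`: lattice paths from `u` to `v`, identified with their underlying sets of cells. -/
def LPath (u v : Cell) : Set (Set Cell) :=
  {S | ∃ p : List Cell, IsLatticePathList u v p ∧ S = {x | x ∈ p}}

/-- `L_Θ(u,v)`: lattice paths from `u` to `v` contained in `Θ`. -/
def LPathIn (Θ : Set Cell) (u v : Cell) : Set (Set Cell) := {S | S ∈ LPath u v ∧ S ⊆ Θ}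

/-- One lattice step on the cylinder. -/
def cylStep (ω : Cell) (x y : Cyl ω) : Prop :=
  ∃ u v : Cell, pr ω u = x ∧ pr ω v = y ∧ stepRel u v

/-- `S` is a non-intersecting loop of length `n` in the cylinder. -/
def IsNILoop (ω : Cell) (n : ℕ) (S : Set (Cyl ω)) : Prop :=
  ∃ u : ZMod n → Cyl ω, Function.Injective u ∧ S = Set.range u ∧
    ∀ i : ZMod n, cylStep ω (u i) (u (i + 1))

/-- `h^{s,t}_{m,ℓ}(x) = ℓ+m−a−b+dt+s+1` where `x = (a, b−dℓ)` with `2 ≤ b ≤ ℓ+1`, `d ≥ 0`. -/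
def hst (m l s t : ℤ) (x : Cell) : ℤ :=
  l + m - x.1 - x.2 + ((l + 1 - x.2) / l) * (t - l) + s + 1

/-- The hook lengths `h_i` of the bar case: `h_{ℓt+j} = (ℓ+1)t+j = i + (i−1)/ℓ`. -/
def hbar (l i : ℤ) : ℤ := i + (i - 1) / l


lemma pr_eq_iff (ω u v : Cell) : pr ω u = pr ω v ↔ ∃ k : ℤ, v = u + k • ω := by
  show (QuotientAddGroup.mk u : Cyl ω) = QuotientAddGroup.mk v ↔ _
  rw [QuotientAddGroup.eq, AddSubgroup.mem_zmultiples_iff]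
  constructor
  · rintro ⟨k, hk⟩; exact ⟨k, by rw [hk]; abel⟩
  · rintro ⟨k, rfl⟩; exact ⟨k, by abel⟩

lemma pr_surj (ω : Cell) : Function.Surjective (pr ω) := QuotientAddGroup.mk_surjective

lemma cellLE_iff (u v : Cell) : cellLE u v ↔ v ≤ u := by
  simp [cellLE, Prod.le_def]

/-- The relation `⊴` on `C_ω` is a partial order, and every nontrivial order filter of
`(C_ω, ⊴)` is the cylindric diagram `λ̂` of a unique `λ ∈ P_{m,ℓ}` (unique as a
sequence `λ_1, …, λ_m`). -/
theorem cyl_poset_and_filters_classified (m l : ℕ) (hm : 1 ≤ m) (hl : 1 ≤ l) :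
    (∀ x : Cyl ((m : ℤ), -(l : ℤ)), cylLE ((m : ℤ), -(l : ℤ)) x x) ∧
    (∀ x y z : Cyl ((m : ℤ), -(l : ℤ)),
      cylLE ((m : ℤ), -(l : ℤ)) x y → cylLE ((m : ℤ), -(l : ℤ)) y z →
        cylLE ((m : ℤ), -(l : ℤ)) x z) ∧
    (∀ x y : Cyl ((m : ℤ), -(l : ℤ)),
      cylLE ((m : ℤ), -(l : ℤ)) x y → cylLE ((m : ℤ), -(l : ℤ)) y x → x = y) ∧
    ∀ θ : Set (Cyl ((m : ℤ), -(l : ℤ))),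
      (∀ x ∈ θ, ∀ y, cylLE ((m : ℤ), -(l : ℤ)) x y → y ∈ θ) →
      θ ≠ ∅ → θ ≠ Set.univ →
      ∃ lam : ℤ → ℤ, IsRestricted m l lam ∧ θ = cylDiag m l lam ∧
        ∀ lam' : ℤ → ℤ, IsRestricted m l lam' → θ = cylDiag m l lam' →
          ∀ a : ℤ, 1 ≤ a → a ≤ (m : ℤ) → lam' a = lam a := by
  set ω : Cell := ((m : ℤ), -(l : ℤ)) with hω
  have hm' : (1 : ℤ) ≤ (m : ℤ) := by exact_mod_cast hm
  have hl' : (1 : ℤ) ≤ (l : ℤ) := by exact_mod_cast hl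
  have hsmul : ∀ k : ℤ, k • ω = ((k * m : ℤ), (-(k * l) : ℤ)) := by
    intro k; simp [hω, Prod.smul_def, smul_eq_mul, mul_neg]
  have haddsmul : ∀ (a b k : ℤ), ((a, b) : Cell) + k • ω = (a + k * m, b - k * l) := by
    intro a b k; rw [hsmul]; simp [Prod.mk_add_mk, sub_eq_add_neg]
  refine ⟨fun x => ?_, fun x y z => ?_, fun x y => ?_, ?_⟩
  · obtain ⟨u, rfl⟩ := pr_surj ω x
    exact ⟨u, u, rfl, rfl, le_refl _, le_refl _⟩
  · rintro ⟨u, v, hu, hv, huv⟩ ⟨v', w, hv', hw, hvw⟩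
    obtain ⟨k, hk⟩ := (pr_eq_iff ω v v').1 (hv.trans hv'.symm)
    refine ⟨u, w - k • ω, hu, ?_, ?_⟩
    · rw [← hw]
      exact ((pr_eq_iff ω w (w - k • ω)).2 ⟨-k, by rw [neg_smul, ← sub_eq_add_neg]⟩).symm
    · rw [cellLE_iff] at *
      have : w ≤ v + k • ω := hk ▸ hvw
      calc w - k • ω ≤ v := by rwa [sub_le_iff_le_add]
        _ ≤ u := huv
  · rintro ⟨u, v, hu, hv, huv⟩ ⟨v', u', hv', hu', h2⟩
    obtain ⟨k, hk⟩ := (pr_eq_iff ω v v').1 (hv.trans hv'.symm)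
    obtain ⟨j, hj⟩ := (pr_eq_iff ω u u').1 (hu.trans hu'.symm)
    rw [cellLE_iff] at huv h2
    subst hk hj
    have h1 : u.1 + j * m ≤ v.1 + k * m := by
      have := h2.1; rw [hsmul, hsmul] at this; simpa using this
    have h2' : u.2 - j * l ≤ v.2 - k * l := by
      have := h2.2; rw [hsmul, hsmul] at this
      simp at this; linarith [this]
    have hjk : j = k := by nlinarith [huv.1, huv.2]
    subst hjk
    have : u = v := le_antisymm (by
      constructor
      · have := h1; simpa using by linarith
      · linarith [h2']) huv
    rw [← hu, ← hv, this]
  intro θ hfil hne hneu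
  set Θ : Set Cell := {u | pr ω u ∈ θ} with hΘ
  have hper : ∀ (u : Cell) (k : ℤ), u + k • ω ∈ Θ ↔ u ∈ Θ := by
    intro u k
    have : pr ω (u + k • ω) = pr ω u := ((pr_eq_iff ω u _).2 ⟨k, rfl⟩).symm
    simp only [hΘ, Set.mem_setOf_eq, this]
  have hdown : ∀ u ∈ Θ, ∀ v : Cell, v ≤ u → v ∈ Θ := by
    intro u hu v hv
    exact hfil (pr ω u) hu (pr ω v) ⟨u, v, rfl, rfl, (cellLE_iff u v).2 hv⟩
  -- witnesses
  obtain ⟨x0, hx0⟩ := Set.nonempty_iff_ne_empty.2 hne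
  obtain ⟨⟨a₀, b₀⟩, rfl⟩ := pr_surj ω x0
  have hu₀ : ((a₀, b₀) : Cell) ∈ Θ := hx0
  obtain ⟨x1, hx1⟩ := (Set.ne_univ_iff_exists_notMem θ).1 hneu
  obtain ⟨⟨a₁, b₁⟩, rfl⟩ := pr_surj ω x1
  have hu₁ : ((a₁, b₁) : Cell) ∉ Θ := hx1
  -- each column is nonempty and bounded above
  have hcolne : ∀ a : ℤ, ∃ b : ℤ, ((a, b) : Cell) ∈ Θ := by
    intro a
    set k : ℤ := max 0 (a - a₀) with hk
    have hk0 : 0 ≤ k := le_max_left _ _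
    have hk1 : a - a₀ ≤ k := le_max_right _ _
    have hkm : a ≤ a₀ + k * m := by nlinarith
    refine ⟨b₀ - k * l, hdown ((a₀, b₀) + k • ω) ((hper _ k).2 hu₀) _ ?_⟩
    rw [haddsmul]
    exact Prod.mk_le_mk.2 ⟨hkm, le_refl _⟩
  have hcolbd : ∀ a b : ℤ, ((a, b) : Cell) ∈ Θ → b < b₁ + (max 0 (a₁ - a)) * l := by
    intro a b hb
    by_contra h
    push_neg at h
    set k : ℤ := max 0 (a₁ - a) with hk
    have hk0 : 0 ≤ k := le_max_left _ _
    have hk1 : a₁ - a ≤ k := le_max_right _ _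
    have hkm : a₁ - k * m ≤ a := by nlinarith
    have hmem : ((a₁ - k * m, b₁ + k * l) : Cell) ∈ Θ :=
      hdown (a, b) hb _ (Prod.mk_le_mk.2 ⟨hkm, h⟩)
    have : ((a₁, b₁) : Cell) ∈ Θ := by
      have := (hper (a₁ - k * m, b₁ + k * l) k).2 hmem
      rwa [haddsmul, sub_add_cancel, add_sub_cancel_right] at this
    exact hu₁ this
  have hcol : ∀ a : ℤ, ∃ M : ℤ, ((a, M) : Cell) ∈ Θ ∧ ∀ b : ℤ, ((a, b) : Cell) ∈ Θ → b ≤ M := by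
    intro a
    obtain ⟨M, hM1, hM2⟩ := Int.exists_greatest_of_bdd
      (P := fun b => ((a, b) : Cell) ∈ Θ)
      ⟨b₁ + (max 0 (a₁ - a)) * l, fun b hb => le_of_lt (hcolbd a b hb)⟩ (hcolne a)
    exact ⟨M, hM1, hM2⟩
  choose μ hμ1 hμ2 using hcol
  have memiff : ∀ a b : ℤ, ((a, b) : Cell) ∈ Θ ↔ b ≤ μ a := by
    intro a b
    refine ⟨hμ2 a b, fun h => hdown (a, μ a) (hμ1 a) _ (Prod.mk_le_mk.2 ⟨le_refl _, h⟩)⟩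
  have hstep : ∀ a : ℤ, μ (a + 1) ≤ μ a := by
    intro a
    exact hμ2 a _ (hdown (a + 1, μ (a + 1)) (hμ1 _) _ (Prod.mk_le_mk.2 ⟨by linarith, le_refl _⟩))
  have hperμ : ∀ a : ℤ, μ (a + m) = μ a - l := by
    intro a
    have h1 : ((a + m, μ a - l) : Cell) ∈ Θ := by
      have := (hper (a, μ a) (1 : ℤ)).2 (hμ1 a)
      rwa [haddsmul, one_mul, one_mul] at this
    have h2 : ((a, μ (a + m) + l) : Cell) ∈ Θ := by
      have h3 : ((a, μ (a + m) + l) : Cell) + (1 : ℤ) • ω ∈ Θ := by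
        rw [haddsmul, one_mul, one_mul, add_sub_cancel_right]
        exact hμ1 (a + m)
      exact (hper _ 1).1 h3
    have := hμ2 (a + m) _ h1
    have := hμ2 a _ h2
    omega
  -- Θ is the periodic diagram of μ
  have ΘeqPer : Θ = perDiag m l μ := by
    ext ⟨a, b⟩
    constructor
    · intro h
      set k : ℤ := (a - 1) / m with hkdef
      set r : ℤ := (a - 1) % m with hrdef
      have hm0 : (m : ℤ) ≠ 0 := by linarith
      have h0r : 0 ≤ r := Int.emod_nonneg _ hm0
      have hrm : r < m := Int.emod_lt_of_pos _ (by linarith)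
      have heq : a = r + 1 + k * m := by
        have := Int.emod_add_mul_ediv (a - 1) m
        rw [← hrdef, ← hkdef] at this
        linarith
      have hmem : ((r + 1, b + k * l) : Cell) ∈ Θ := by
        have : ((r + 1, b + k * l) : Cell) + k • ω ∈ Θ := by
          rw [haddsmul, add_sub_cancel_right, ← heq]
          exact h
        exact (hper _ k).1 this
      refine ⟨(r + 1, b + k * l), ⟨by simpa using h0r, by simpa using hrm, (memiff _ _).1 hmem⟩,
        k, ?_⟩
      rw [haddsmul, add_sub_cancel_right, ← heq]
    · rintro ⟨⟨c, d⟩, hy, k, hk⟩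
      have hmem : ((c, d) : Cell) ∈ Θ := (memiff c d).2 hy.2.2
      rw [hk]
      exact (hper _ k).2 hmem
  have hθΘ : θ = pr ω '' Θ := by
    ext x
    constructor
    · intro hx
      obtain ⟨u, rfl⟩ := pr_surj ω x
      exact ⟨u, hx, rfl⟩
    · rintro ⟨u, hu, rfl⟩
      exact hu
  refine ⟨μ, ⟨fun a _ _ => hstep a, ?_⟩, ?_, ?_⟩
  · have h1 := hperμ 1
    have h2 := hstep m
    rw [add_comm] at h1
    omega
  · rw [hθΘ, ΘeqPer]; rfl
  · intro lam' _ hθ' a ha1 ham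
    have key : ∀ b : ℤ, ((a, b) : Cell) ∈ Θ ↔ b ≤ lam' a := by
      intro b
      constructor
      · intro h
        have hx : pr ω (a, b) ∈ cylDiag m l lam' := by rw [← hθ']; exact h
        obtain ⟨y, hy, hpy⟩ := hx
        obtain ⟨k, hk⟩ := (pr_eq_iff ω y (a, b)).1 hpy
        obtain ⟨⟨c, d⟩, hcd, k', rfl⟩ := hy
        have hk2 : ((a, b) : Cell) = (c + (k' + k) * m, d - (k' + k) * l) := by
          rw [hk, haddsmul c d k', haddsmul]
          simp only [Prod.mk.injEq]
          constructor <;> ring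
        obtain ⟨hc1, hc2, hd⟩ := hcd
        simp only [Prod.mk.injEq] at hk2
        obtain ⟨hka, hkb⟩ := hk2
        simp only at hc1 hc2 hd
        have hK : k' + k = 0 := by
          rcases lt_trichotomy (k' + k) 0 with hK | hK | hK
          · exfalso; nlinarith
          · exact hK
          · exfalso; nlinarith
        rw [hK] at hka hkb
        simp at hka hkb
        subst hka
        omega
      · intro h
        have : ((a, b) : Cell) ∈ perDiag m l lam' :=
          ⟨(a, b), ⟨ha1, ham, h⟩, 0, by simp⟩
        have : pr ω (a, b) ∈ cylDiag m l lam' := ⟨_, this, rfl⟩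
        rw [← hθ'] at this
        exact this
    have h1 : lam' a ≤ μ a := hμ2 a _ ((key (lam' a)).2 le_rfl)
    have h2 : μ a ≤ lam' a := (key (μ a)).1 (hμ1 a)
    omega
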